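/- arXiv:2106.10993 — 2 statements merged into one kernel-verified Lean document; each statement's English description precedes it below -/
import Mathlib

section
/- Let M = (E, ρ) be a q-matroid on E = F_q^n. A subspace X ⊆ E is a q-flat of rank r of M if and only if X^⊥ is a q-cycle of the dual q-matroid M* of nullity ρ(E) − r. -/
/-- The orthogonal complement of a subspace of `F_q^n` with respect to the
standard dot product. -/
def perp {Fq : Type*} [Field Fq] {n : ℕ} (X : Submodule Fq (Fin n → Fq)) :
    Submodule Fq (Fin n → Fq) where
  carrier := {v | ∀ u ∈ X, dotProduct v u = 0}
  add_mem' := by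
    intro a b ha hb u hu
    simp [add_dotProduct, ha u hu, hb u hu]
  zero_mem' := by intro u hu; simp
  smul_mem' := by
    intro c a ha u hu
    simp [smul_dotProduct, ha u hu]

/-- A `q`-flat of a `q`-matroid `(F_q^n, ρ)`: a subspace `F` such that adding
any line not contained in `F` strictly increases the rank. -/
def IsQFlat {Fq : Type*} [Field Fq] {n : ℕ} (ρ : Submodule Fq (Fin n → Fq) → ℕ)
    (F : Submodule Fq (Fin n → Fq)) : Prop :=
  ∀ e : Fin n → Fq, e ∉ F → ρ F < ρ (F ⊔ Submodule.span Fq {e})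

/-- The rank function of the dual `q`-matroid: `ρ*(X) = dim X + ρ(X^⊥) - ρ(E)`. -/
noncomputable def qDualRank {Fq : Type*} [Field Fq] {n : ℕ} (ρ : Submodule Fq (Fin n → Fq) → ℕ)
    (X : Submodule Fq (Fin n → Fq)) : ℕ :=
  Module.finrank Fq ↥X + ρ (perp X) - ρ ⊤

/-- The nullity function of the dual `q`-matroid: `η*(X) = dim X - ρ*(X)`. -/
noncomputable def qDualNullity {Fq : Type*} [Field Fq] {n : ℕ} (ρ : Submodule Fq (Fin n → Fq) → ℕ)
    (X : Submodule Fq (Fin n → Fq)) : ℕ :=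
  Module.finrank Fq ↥X - qDualRank ρ X

/-- A `q`-cycle of the dual `q`-matroid: a subspace minimal (w.r.t. inclusion)
among all subspaces with the same dual nullity. -/
def IsQCycleDual {Fq : Type*} [Field Fq] {n : ℕ} (ρ : Submodule Fq (Fin n → Fq) → ℕ)
    (X : Submodule Fq (Fin n → Fq)) : Prop :=
  ∀ Y ≤ X, qDualNullity ρ Y = qDualNullity ρ X → Y = X

namespace Stmt6Aux

open Module

variable {Fq : Type*} [Field Fq] {n : ℕ}

lemma mem_perp {v : Fin n → Fq} {X : Submodule Fq (Fin n → Fq)} :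
    v ∈ perp X ↔ ∀ u ∈ X, dotProduct v u = 0 := Iff.rfl

noncomputable def dpDual : (Fin n → Fq) →ₗ[Fq] Module.Dual Fq (Fin n → Fq) :=
  LinearMap.mk₂ Fq dotProduct
    (fun m₁ m₂ m => add_dotProduct m₁ m₂ m)
    (fun c m m' => smul_dotProduct c m m')
    (fun m m₁ m₂ => dotProduct_add m m₁ m₂)
    (fun c m m' => dotProduct_smul c m m')

lemma dpDual_inj : Function.Injective (dpDual (Fq := Fq) (n := n)) := by
  intro a b h
  funext i
  have := LinearMap.congr_fun h (Pi.single i 1)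
  simpa [dpDual, dotProduct_single] using this

noncomputable def dpEquiv : (Fin n → Fq) ≃ₗ[Fq] Module.Dual Fq (Fin n → Fq) :=
  LinearEquiv.ofBijective dpDual
    ⟨dpDual_inj, (LinearMap.injective_iff_surjective_of_finrank_eq_finrank
      (Subspace.dual_finrank_eq).symm).mp dpDual_inj⟩

lemma perp_eq (X : Submodule Fq (Fin n → Fq)) :
    perp X = X.dualAnnihilator.comap (dpEquiv (Fq := Fq) (n := n)).toLinearMap := by
  ext v
  simp only [mem_perp, Submodule.mem_comap, Submodule.mem_dualAnnihilator]
  constructor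
  · intro h w hw; simpa [dpEquiv, dpDual] using h w hw
  · intro h w hw; simpa [dpEquiv, dpDual] using h w hw

lemma finrank_perp (X : Submodule Fq (Fin n → Fq)) :
    finrank Fq (perp X) + finrank Fq X = n := by
  rw [perp_eq, Submodule.comap_equiv_eq_map_symm]
  rw [LinearEquiv.finrank_map_eq]
  have h1 : finrank Fq X.dualAnnihilator = finrank Fq ((Fin n → Fq) ⧸ X) :=
    (LinearEquiv.finrank_eq (Subspace.quotEquivAnnihilator X)).symm
  rw [h1, Submodule.finrank_quotient_add_finrank, Module.finrank_fin_fun]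

lemma le_perp_swap {X Y : Submodule Fq (Fin n → Fq)} (h : Y ≤ perp X) : X ≤ perp Y := by
  intro x hx
  intro y hy
  rw [dotProduct_comm]
  exact h hy x hx

lemma le_perp_perp (X : Submodule Fq (Fin n → Fq)) : X ≤ perp (perp X) :=
  le_perp_swap le_rfl

lemma perp_perp (X : Submodule Fq (Fin n → Fq)) : perp (perp X) = X := by
  have h1 := finrank_perp X
  have h2 := finrank_perp (perp X)
  exact (Submodule.eq_of_le_of_finrank_le (le_perp_perp X) (by omega)).symm

lemma perp_anti {X Y : Submodule Fq (Fin n → Fq)} (h : X ≤ Y) : perp Y ≤ perp X :=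
  fun v hv u hu => hv u (h hu)

lemma rho_le (ρ : Submodule Fq (Fin n → Fq) → ℕ)
    (hP1 : ∀ X, ρ X ≤ Module.finrank Fq ↥X)
    (hP3 : ∀ X Y, ρ (X ⊔ Y) + ρ (X ⊓ Y) ≤ ρ X + ρ Y) :
    ∀ k (W : Submodule Fq (Fin n → Fq)), finrank Fq W + k = n → ρ ⊤ ≤ ρ W + k := by
  intro k
  induction k with
  | zero =>
    intro W hW
    have : W = ⊤ := Submodule.eq_top_of_finrank_eq (by rw [Module.finrank_fin_fun]; omega)
    rw [this]; omega
  | succ k ih =>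
    intro W hW
    have hWne : W ≠ ⊤ := by
      intro h
      rw [h, finrank_top, Module.finrank_fin_fun] at hW
      omega
    obtain ⟨e, -, he⟩ := SetLike.exists_of_lt (lt_of_le_of_ne le_top hWne).lt_top
    have he0 : e ≠ 0 := fun h => he (h ▸ W.zero_mem)
    have hsp : finrank Fq (Submodule.span Fq {e}) = 1 := finrank_span_singleton he0
    have hdis : W ⊓ Submodule.span Fq {e} = ⊥ :=
      disjoint_iff.mp ((Submodule.disjoint_span_singleton' he0).mpr he)
    have hfr : finrank Fq ↥(W ⊔ Submodule.span Fq {e}) + k = n := by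
      have h := Submodule.finrank_sup_add_finrank_inf_eq W (Submodule.span Fq {e})
      rw [hdis, hsp, finrank_bot] at h
      omega
    have hstep : ρ (W ⊔ Submodule.span Fq {e}) ≤ ρ W + 1 := by
      have h3 := hP3 W (Submodule.span Fq {e})
      have h1 := hP1 (Submodule.span Fq {e})
      rw [hsp] at h1
      omega
    have := ih _ hfr
    omega

lemma nullity_eq (ρ : Submodule Fq (Fin n → Fq) → ℕ)
    (hP1 : ∀ X, ρ X ≤ Module.finrank Fq ↥X)
    (hP2 : ∀ X Y, X ≤ Y → ρ X ≤ ρ Y)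
    (hP3 : ∀ X Y, ρ (X ⊔ Y) + ρ (X ⊓ Y) ≤ ρ X + ρ Y)
    (Y : Submodule Fq (Fin n → Fq)) :
    qDualNullity ρ Y = ρ ⊤ - ρ (perp Y) := by
  have h1 : ρ (perp Y) ≤ ρ ⊤ := hP2 _ _ le_top
  have h2 : ρ ⊤ ≤ ρ (perp Y) + finrank Fq Y :=
    rho_le ρ hP1 hP3 (finrank Fq Y) (perp Y) (finrank_perp Y)
  unfold qDualNullity qDualRank
  omega

end Stmt6Aux

open Stmt6Aux in
/-- a subspace `X` is a `q`-flat of rank `r` of the `q`-matroid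
`M = (F_q^n, ρ)` if and only if `X^⊥` is a `q`-cycle of the dual `q`-matroid
`M*` of nullity `ρ(E) − r`. -/
theorem stmt_6 {Fq : Type*} [Field Fq] [Fintype Fq] {n : ℕ}
    (ρ : Submodule Fq (Fin n → Fq) → ℕ)
    (hP1 : ∀ X, ρ X ≤ Module.finrank Fq ↥X)
    (hP2 : ∀ X Y, X ≤ Y → ρ X ≤ ρ Y)
    (hP3 : ∀ X Y, ρ (X ⊔ Y) + ρ (X ⊓ Y) ≤ ρ X + ρ Y)
    (X : Submodule Fq (Fin n → Fq)) (r : ℕ) :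
    (IsQFlat ρ X ∧ ρ X = r) ↔
      (IsQCycleDual ρ (perp X) ∧ qDualNullity ρ (perp X) + r = ρ ⊤) := by
  have hXle : ρ X ≤ ρ ⊤ := hP2 _ _ le_top
  have hnX : qDualNullity ρ (perp X) = ρ ⊤ - ρ X := by
    rw [nullity_eq ρ hP1 hP2 hP3, perp_perp]
  constructor
  · rintro ⟨hflat, hr⟩
    refine ⟨?_, by omega⟩
    intro Y hY hnull
    rw [nullity_eq ρ hP1 hP2 hP3, hnX] at hnull
    have h1 : ρ (perp Y) ≤ ρ ⊤ := hP2 _ _ le_top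
    have heq : ρ (perp Y) = ρ X := by omega
    have hXperpY : X ≤ perp Y := le_perp_swap hY
    have hPY : perp Y = X := by
      by_contra hne
      obtain ⟨e, he1, he2⟩ := SetLike.exists_of_lt (lt_of_le_of_ne hXperpY (Ne.symm hne))
      have hfl := hflat e he2
      have hle : X ⊔ Submodule.span Fq {e} ≤ perp Y :=
        sup_le hXperpY ((Submodule.span_singleton_le_iff_mem e _).mpr he1)
      have := hP2 _ _ hle
      omega
    rw [← perp_perp Y, hPY]
  · rintro ⟨hcyc, hnull⟩
    have hrX : ρ X = r := by omega
    refine ⟨?_, hrX⟩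
    intro e he
    by_contra hlt
    have hmono := hP2 X (X ⊔ Submodule.span Fq {e}) le_sup_left
    have heq : ρ (X ⊔ Submodule.span Fq {e}) = ρ X := le_antisymm (not_lt.mp hlt) hmono
    have hYle : perp (X ⊔ Submodule.span Fq {e}) ≤ perp X := perp_anti le_sup_left
    have hnulleq : qDualNullity ρ (perp (X ⊔ Submodule.span Fq {e}))
        = qDualNullity ρ (perp X) := by
      rw [nullity_eq ρ hP1 hP2 hP3, nullity_eq ρ hP1 hP2 hP3, perp_perp, perp_perp, heq]
    have hZX := hcyc _ hYle hnulleq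
    have hZ : X ⊔ Submodule.span Fq {e} = X := by
      rw [← perp_perp (X ⊔ Submodule.span Fq {e}), hZX, perp_perp]
    exact he (hZ ▸ Submodule.mem_sup_right (Submodule.mem_span_singleton_self e))
end

section
/- For any q-matroid M on F_q^n, the poset of flats of the classical matroid Cl(M) (ordered by inclusion) is isomorphic to the poset of q-flats of M (ordered by subspace inclusion). -/
/-- The projectivization `P(E)`: the set of one-dimensional subspaces of `F_q^n`. -/
def ProjLine (Fq : Type*) [Field Fq] (n : ℕ) : Type _ :=
  {L : Submodule Fq (Fin n → Fq) // Module.finrank Fq ↥L = 1}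

/-- The subspace of `F_q^n` spanned by a set of lines. -/
def spanLines {Fq : Type*} [Field Fq] {n : ℕ} (S : Set (ProjLine Fq n)) :
    Submodule Fq (Fin n → Fq) :=
  ⨆ L ∈ S, (L : ProjLine Fq n).1

/-- A flat of the classical matroid `Cl(M)` with rank function `r_ρ(S) = ρ(⟨S⟩)`. -/
def IsClFlat {Fq : Type*} [Field Fq] {n : ℕ} (ρ : Submodule Fq (Fin n → Fq) → ℕ)
    (S : Set (ProjLine Fq n)) : Prop :=
  ∀ x ∉ S, ρ (spanLines S) < ρ (spanLines (insert x S))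

section Aux
variable {Fq : Type*} [Field Fq] {n : ℕ}

lemma spanLines_mono {S T : Set (ProjLine Fq n)} (h : S ⊆ T) : spanLines S ≤ spanLines T :=
  iSup_le fun L => iSup_le fun hL => le_iSup_of_le L (le_iSup_of_le (h hL) le_rfl)

lemma line_le_spanLines {S : Set (ProjLine Fq n)} {L : ProjLine Fq n} (h : L ∈ S) :
    L.1 ≤ spanLines S := le_iSup_of_le L (le_iSup_of_le h le_rfl)

lemma spanLines_insert (x : ProjLine Fq n) (S : Set (ProjLine Fq n)) :
    spanLines (insert x S) = x.1 ⊔ spanLines S := by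
  exact iSup_insert

lemma spanLines_setOf_le (F : Submodule Fq (Fin n → Fq)) :
    spanLines {L : ProjLine Fq n | L.1 ≤ F} = F := by
  apply le_antisymm
  · exact iSup_le fun L => iSup_le fun hL => hL
  · intro v hv
    by_cases hv0 : v = 0
    · simp [hv0]
    · have h1 : Module.finrank Fq ↥(Submodule.span Fq ({v} : Set (Fin n → Fq))) = 1 :=
        finrank_span_singleton hv0
      have hle : (⟨Submodule.span Fq {v}, h1⟩ : ProjLine Fq n).1 ≤
          spanLines {L : ProjLine Fq n | L.1 ≤ F} :=
        line_le_spanLines (by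
          show (⟨Submodule.span Fq {v}, h1⟩ : ProjLine Fq n).1 ≤ F
          exact Submodule.span_le.mpr (by simpa using hv))
      exact hle (Submodule.mem_span_singleton_self v)

variable (ρ : Submodule Fq (Fin n → Fq) → ℕ)

/-- A Cl-flat equals the set of lines inside its span. -/
lemma clFlat_eq_setOf {S : Set (ProjLine Fq n)} (hS : IsClFlat ρ S) :
    S = {L : ProjLine Fq n | L.1 ≤ spanLines S} := by
  apply Set.Subset.antisymm
  · intro L hL
    exact line_le_spanLines hL
  · intro L hL
    by_contra hLS
    have := hS L hLS
    rw [spanLines_insert, sup_eq_right.mpr hL] at this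
    exact lt_irrefl _ this

lemma clFlat_span_qFlat {S : Set (ProjLine Fq n)} (hS : IsClFlat ρ S) :
    IsQFlat ρ (spanLines S) := by
  intro e he
  have he0 : e ≠ 0 := fun h => he (h ▸ (spanLines S).zero_mem)
  have h1 : Module.finrank Fq ↥(Submodule.span Fq ({e} : Set (Fin n → Fq))) = 1 :=
    finrank_span_singleton he0
  set L : ProjLine Fq n := ⟨Submodule.span Fq {e}, h1⟩
  have hLS : L ∉ S := fun h =>
    he (line_le_spanLines h (Submodule.mem_span_singleton_self e))
  have := hS L hLS
  rwa [spanLines_insert, sup_comm] at this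

lemma qFlat_setOf_clFlat {F : Submodule Fq (Fin n → Fq)} (hF : IsQFlat ρ F) :
    IsClFlat ρ {L : ProjLine Fq n | L.1 ≤ F} := by
  intro x hx
  simp only [Set.mem_setOf_eq] at hx
  obtain ⟨e, hex, heF⟩ := SetLike.not_le_iff_exists.mp hx
  have he0 : e ≠ 0 := fun h => heF (h ▸ F.zero_mem)
  have hxe : x.1 = Submodule.span Fq ({e} : Set (Fin n → Fq)) := by
    refine (Submodule.eq_of_le_of_finrank_le (Submodule.span_le.mpr (by simpa using hex)) ?_).symm
    rw [x.2, finrank_span_singleton he0]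
  rw [spanLines_insert, spanLines_setOf_le, hxe, sup_comm]
  exact hF e heF
end Aux

/-- the poset of flats of `Cl(M)` (ordered by inclusion) is
isomorphic to the poset of `q`-flats of `M` (ordered by subspace inclusion). -/
theorem stmt_9 {Fq : Type*} [Field Fq] [Fintype Fq] {n : ℕ}
    (ρ : Submodule Fq (Fin n → Fq) → ℕ)
    (hP1 : ∀ X, ρ X ≤ Module.finrank Fq ↥X)
    (hP2 : ∀ X Y, X ≤ Y → ρ X ≤ ρ Y)
    (hP3 : ∀ X Y, ρ (X ⊔ Y) + ρ (X ⊓ Y) ≤ ρ X + ρ Y) :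
    Nonempty ({S : Set (ProjLine Fq n) // IsClFlat ρ S} ≃o
      {F : Submodule Fq (Fin n → Fq) // IsQFlat ρ F}) := by
  refine ⟨⟨⟨fun S => ⟨spanLines S.1, clFlat_span_qFlat ρ S.2⟩,
      fun F => ⟨{L | L.1 ≤ F.1}, qFlat_setOf_clFlat ρ F.2⟩, ?_, ?_⟩, ?_⟩⟩
  · intro S
    apply Subtype.ext
    exact (clFlat_eq_setOf ρ S.2).symm
  · intro F
    apply Subtype.ext
    exact spanLines_setOf_le F.1
  · intro S T
    constructor
    · intro h L hL
      have h1 : L.1 ≤ spanLines T.1 := le_trans (line_le_spanLines hL) h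
      have := (clFlat_eq_setOf ρ T.2).symm
      exact this ▸ h1
    · exact fun h => spanLines_mono h
end
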